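/- arXiv:1304.0249 — 4 statements merged into one kernel-verified Lean document; each statement's English description precedes it below -/
import Mathlib

section
/- For every integer s ≥ 9 and every real δ with 1/√(s+1) < δ < 1/√s, the quantity (2√(s+1) − s)·√(1 − s·δ²) + s·(1 − √(s+1))·δ + s − 2 is nonnegative. -/
set_option maxHeartbeats 1000000


theorem stmt_0 (s : ℕ) (hs : 9 ≤ s) (δ : ℝ)
    (h1 : 1 / Real.sqrt (s + 1) < δ) (h2 : δ < 1 / Real.sqrt s) :
    0 ≤ (2 * Real.sqrt (s + 1) - s) * Real.sqrt (1 - s * δ ^ 2)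
      + s * (1 - Real.sqrt (s + 1)) * δ + s - 2 := by
  have hs9 : (9:ℝ) ≤ (s:ℝ) := by exact_mod_cast hs
  set u := Real.sqrt ((s:ℝ) + 1) with hu_def
  have hu2 : u ^ 2 = (s:ℝ) + 1 := Real.sq_sqrt (by positivity)
  have hu3 : (3:ℝ) ≤ u := by
    have h9 : Real.sqrt 9 ≤ u := Real.sqrt_le_sqrt (by linarith)
    have : Real.sqrt 9 = 3 := by
      rw [show (9:ℝ) = 3 ^ 2 by norm_num, Real.sqrt_sq (by norm_num)]
    linarith
  have hu0 : (0:ℝ) < u := by linarith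
  have hδ0 : (0:ℝ) < δ := lt_trans (by positivity) h1
  have huδ : 1 < u * δ := by
    rw [div_lt_iff₀ hu0] at h1
    nlinarith
  have hss : (0:ℝ) < Real.sqrt s := Real.sqrt_pos.mpr (by linarith)
  have h2s : (Real.sqrt s) ^ 2 = (s:ℝ) := Real.sq_sqrt (by linarith)
  have h2' : δ * Real.sqrt s < 1 := by rw [lt_div_iff₀ hss] at h2; linarith
  have hsδ : (s:ℝ) * δ ^ 2 < 1 := by
    have hq : (s:ℝ) * δ ^ 2 = (δ * Real.sqrt s) ^ 2 := by rw [mul_pow, h2s]; ring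
    rw [hq]
    nlinarith [mul_pos hδ0 hss]
  set a := Real.sqrt (1 - s * δ ^ 2) with ha_def
  have ha0 : (0:ℝ) ≤ a := Real.sqrt_nonneg _
  have ha2 : a ^ 2 = 1 - (s:ℝ) * δ ^ 2 := Real.sq_sqrt (by linarith)
  have huass : (u * a) ^ 2 = ((s:ℝ) + 1) * (1 - s * δ ^ 2) := by
    rw [mul_pow, hu2, ha2]
  have h5 : 1 < ((s:ℝ) + 1) * δ ^ 2 := by
    have huds : (u * δ) ^ 2 = ((s:ℝ) + 1) * δ ^ 2 := by rw [mul_pow, hu2]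
    nlinarith [huδ]
  have h7 : 0 ≤ (s:ℝ) * (((s:ℝ) + 1) * δ ^ 2 - 1) := mul_nonneg (by linarith) (by linarith)
  have h6 : (u * a) ^ 2 ≤ 1 := by nlinarith [huass, h7]
  have hua : u * a ≤ 1 := by nlinarith [h6, mul_nonneg hu0.le ha0, sq_nonneg (u * a - 1)]
  have haδ : a ≤ δ := by
    have h8 : 1 - (s:ℝ) * δ ^ 2 ≤ δ ^ 2 := by nlinarith [h5]
    calc a ≤ Real.sqrt (δ ^ 2) := Real.sqrt_le_sqrt h8
      _ = δ := Real.sqrt_sq hδ0.le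
  have hA : u - 1 ≤ (s:ℝ) - 2 * u := by
    have := mul_nonneg hu0.le (show (0:ℝ) ≤ u - 3 by linarith)
    nlinarith [this, hu2]
  have hB : (0:ℝ) ≤ u * δ + 1 := by nlinarith
  have hK : 0 ≤ ((s:ℝ) - 2 * u) * (u * δ + 1) - (u - 1) * (1 + u * a) := by
    have step1 : (u - 1) * (u * δ + 1) ≤ ((s:ℝ) - 2 * u) * (u * δ + 1) :=
      mul_le_mul_of_nonneg_right hA hB
    have step2 : (u - 1) * (1 + u * a) ≤ (u - 1) * (u * δ + 1) := by
      have h9 : 1 + u * a ≤ u * δ + 1 := by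
        nlinarith [mul_nonneg hu0.le (sub_nonneg.mpr haδ)]
      exact mul_le_mul_of_nonneg_left h9 (by linarith)
    linarith
  have hP : 0 ≤ (s:ℝ) * (u * δ - 1) *
      (((s:ℝ) - 2 * u) * (u * δ + 1) - (u - 1) * (1 + u * a)) :=
    mul_nonneg (mul_nonneg (by linarith) (by linarith)) hK
  have hId : ((2 * u - (s:ℝ)) * a + (s:ℝ) * (1 - u) * δ + s - 2) * (u * (1 + u * a))
      = (s:ℝ) * (u * δ - 1) *
        (((s:ℝ) - 2 * u) * (u * δ + 1) - (u - 1) * (1 + u * a)) := by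
    linear_combination (2 * u - (s:ℝ)) * hu2 + u ^ 2 * (2 * u - (s:ℝ)) * ha2
  have hpos : 0 < u * (1 + u * a) := by
    have : 0 ≤ u * a := mul_nonneg hu0.le ha0
    nlinarith
  have hfin := (mul_nonneg_iff_of_pos_right hpos).mp (hId ▸ hP)
  linarith
end

section
/- For every integer s ≥ 9 and real δ with 1/√(s+1) < δ < 1/√s, setting a = (2√(s+1) − s)/(2 − δ·s) and b = (s − δ·s·√(s+1))/(2 − δ·s), one has a·√(1−s·δ²) + b ≤ 1. -/
lemma aux_neg_sq_le (X Y : ℝ) (hX : X < 0) (hY : Y ≤ 0) (h : Y^2 ≤ X^2) : X ≤ Y := by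
  nlinarith

set_option maxHeartbeats 1000000 in
theorem stmt_7 (s : ℕ) (hs : 9 ≤ s) (δ : ℝ)
    (h1 : 1 / Real.sqrt (s + 1) < δ) (h2 : δ < 1 / Real.sqrt s) :
    (2 * Real.sqrt (s + 1) - s) / (2 - δ * s) * Real.sqrt (1 - s * δ ^ 2)
      + ((s : ℝ) - δ * s * Real.sqrt (s + 1)) / (2 - δ * s) ≤ 1 := by
  have hs9 : (9:ℝ) ≤ (s:ℝ) := by exact_mod_cast hs
  set S : ℝ := (s:ℝ) with hS
  set t : ℝ := Real.sqrt (S + 1) with htdef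
  set r : ℝ := Real.sqrt S with hrdef
  have hS0 : (0:ℝ) ≤ S := by linarith
  have ht2 : t^2 = S + 1 := Real.sq_sqrt (by linarith)
  have hr2 : r^2 = S := Real.sq_sqrt hS0
  have ht0 : 0 < t := Real.sqrt_pos.2 (by linarith)
  have hr0 : 0 < r := Real.sqrt_pos.2 (by linarith)
  have hr3 : 3 ≤ r := by nlinarith [hr2, hr0]
  have ht3 : 3 ≤ t := by nlinarith [ht2, ht0]
  have hδt : 1 < δ * t := by
    have := (div_lt_iff₀ ht0).1 h1
    linarith
  have hδr : δ * r < 1 := by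
    have := (lt_div_iff₀ hr0).1 h2
    linarith
  have hδ0 : 0 < δ := by
    have : 0 < 1 / t := by positivity
    linarith
  have hu2' : 0 ≤ 1 - S * δ^2 := by
    nlinarith [hr2, mul_pos (show (0:ℝ) < 1 - δ*r by linarith)
      (show (0:ℝ) < 1 + δ*r by positivity)]
  set u : ℝ := Real.sqrt (1 - S * δ^2) with hudef
  have hu0 : 0 ≤ u := Real.sqrt_nonneg _
  have hu2 : u^2 = 1 - S * δ^2 := Real.sq_sqrt hu2'
  -- 2t < S
  have hts : 2 * t < S := by nlinarith [ht2, ht0, hs9]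
  -- denominator negative
  have hD : 2 - δ * S < 0 := by
    have h1' : S / t < δ * S := by
      rw [div_lt_iff₀ ht0]
      nlinarith [hδt, hS0, hs9]
    have h2' : 2 < S / t := by
      rw [lt_div_iff₀ ht0]; linarith
    linarith
  -- X := 2 - δS - S + δSt  is negative
  have hX : 2 - δ * S - S + δ * S * t < 0 := by
    have hA : 0 < S + r - 2 := by linarith
    have hB : 0 < r * t := mul_pos hr0 ht0
    have hAB : (r*t)^2 < (S + r - 2)^2 := by
      nlinarith [hr2, ht2, mul_nonneg (show (0:ℝ) ≤ S - 9 by linarith)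
        (show (0:ℝ) ≤ r - 3 by linarith)]
    have hrt : r * t < S + r - 2 := by nlinarith [hA, hB, hAB]
    have hδS : δ * S < r := by nlinarith [hδr, hr0, hr2]
    have h3 : δ * S * (t - 1) < r * (t - 1) :=
      mul_lt_mul_of_pos_right hδS (by linarith)
    nlinarith [h3, hrt]
  -- coefficient (s+2)t - 3s ≥ 0
  have hc' : 3 * S ≤ (S + 2) * t := by nlinarith [ht2, ht0, hs9]
  -- (s+6)t ≥ 5s+2
  have hGt : 5 * S + 2 ≤ (S + 6) * t := by
    nlinarith [ht2, ht0, hs9, mul_nonneg (by linarith : (0:ℝ) ≤ S - 9) (by nlinarith : (0:ℝ) ≤ S^2 - 3*S + 1)]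
  -- G ≥ 0
  have hG : 0 ≤ 4 - 2 * t + δ * ((S + 2) * t - 3 * S) := by
    have hh : 0 ≤ (δ * t - 1) * ((S + 2) * t - 3 * S) :=
      mul_nonneg (by linarith) (by linarith)
    nlinarith [hh, ht2, ht0, hGt]
  -- the key square inequality via factorization
  have hE : (2 - δ * S - S + δ * S * t)^2 - (2*t - S)^2 * (1 - S * δ^2)
      = 2 * S * (δ * t - 1) * (4 - 2 * t + δ * ((S + 2) * t - 3 * S)) := by
    linear_combination (-(S * δ - 2)^2) * ht2
  have hsq : ((2*t - S) * u)^2 ≤ (2 - δ * S - S + δ * S * t)^2 := by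
    have h0 : 0 ≤ 2 * S * (δ * t - 1) * (4 - 2 * t + δ * ((S + 2) * t - 3 * S)) :=
      mul_nonneg (mul_nonneg (by linarith) (by linarith)) hG
    have : ((2*t - S) * u)^2 = (2*t - S)^2 * (1 - S * δ^2) := by
      rw [mul_pow, hu2]
    rw [this]; linarith [hE, h0]
  have hY : (2*t - S) * u ≤ 0 := mul_nonpos_of_nonpos_of_nonneg (by linarith) hu0
  have hkey : 2 - δ * S - S + δ * S * t ≤ (2*t - S) * u :=
    aux_neg_sq_le _ _ hX hY hsq
  -- finish
  rw [div_mul_eq_mul_div, ← add_div, div_le_one_iff]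
  right; right
  exact ⟨hD, by linarith [hkey]⟩
end

section
/- For every integer s ≥ 9, real δ with 1/√(s+1) < δ < 1/√s, and all positive reals M, m, the expression (s·δ·M + m·√(1 − s·δ²))·(s·δ·M + m·√(1 − s·δ²) + 3) − m² − m − s·M − s·M² is negative. -/
set_option maxHeartbeats 1000000


theorem stmt_11 (s : ℕ) (hs : 9 ≤ s) (δ : ℝ)
    (h1 : 1 / Real.sqrt (s + 1) < δ) (h2 : δ < 1 / Real.sqrt s)
    (M m : ℝ) (hM : 0 < M) (hm : 0 < m) :
    ((s : ℝ) * δ * M + m * Real.sqrt (1 - s * δ ^ 2))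
        * (s * δ * M + m * Real.sqrt (1 - s * δ ^ 2) + 3)
      - m ^ 2 - m - s * M - s * M ^ 2 < 0 := by
  have hsR : (9:ℝ) ≤ s := by exact_mod_cast hs
  have hs0 : (0:ℝ) < s := by linarith
  have hδ0 : 0 < δ := lt_trans (by positivity) h1
  have hr0 : 0 < Real.sqrt s := Real.sqrt_pos.mpr hs0
  have hr : Real.sqrt s * Real.sqrt s = s := Real.mul_self_sqrt hs0.le
  have hrd : Real.sqrt s * δ < 1 := by
    have := (lt_div_iff₀ hr0).mp h2; linarith
  have hsd2 : (s:ℝ) * δ ^ 2 < 1 := by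
    have h' : (Real.sqrt s * δ) ^ 2 < 1 := by
      have := mul_pos hr0 hδ0
      nlinarith
    nlinarith [hr]
  have hr1 : 0 < Real.sqrt ((s:ℝ) + 1) := Real.sqrt_pos.mpr (by linarith)
  have ha2 : (1 / Real.sqrt ((s:ℝ) + 1)) ^ 2 = 1 / ((s:ℝ) + 1) := by
    rw [div_pow, one_pow, Real.sq_sqrt (by linarith : (0:ℝ) ≤ (s:ℝ) + 1)]
  have hδ2 : 1 / ((s:ℝ) + 1) < δ ^ 2 := by
    rw [← ha2]; exact pow_lt_pow_left₀ h1 (by positivity) (by norm_num)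
  have hsd2' : (9:ℝ)/10 < (s:ℝ) * δ ^ 2 := by
    have hmul : (s:ℝ) * (1 / ((s:ℝ)+1)) < (s:ℝ) * δ ^ 2 :=
      mul_lt_mul_of_pos_left hδ2 hs0
    have hfrac : (9:ℝ)/10 ≤ (s:ℝ) * (1 / ((s:ℝ)+1)) := by
      rw [mul_one_div, div_le_div_iff₀ (by norm_num) (by linarith)]
      linarith
    linarith
  set t := Real.sqrt (1 - s * δ ^ 2) with htdef
  have ht0 : 0 ≤ t := Real.sqrt_nonneg _
  have ht2 : t ^ 2 = 1 - s * δ ^ 2 := Real.sq_sqrt (by linarith)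
  have htlt : t < 1/3 := by nlinarith [ht2, ht0, hsd2', sq_nonneg (t - 1/3)]
  have hr3 : (3:ℝ) ≤ Real.sqrt s := by
    have h9 : Real.sqrt 9 ≤ Real.sqrt s := Real.sqrt_le_sqrt hsR
    rwa [show (9:ℝ) = 3^2 by norm_num, Real.sqrt_sq (by norm_num : (0:ℝ) ≤ 3)] at h9
  have hlin : 3 * ((s:ℝ) * δ * M) < s * M := by
    nlinarith [hr, mul_pos (by linarith : (0:ℝ) < 1 - Real.sqrt s * δ) (mul_pos hr0 hM),
      mul_nonneg (mul_nonneg hr0.le (by linarith : (0:ℝ) ≤ Real.sqrt s - 3)) hM.le]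
  have hcauchy : 0 ≤ (s:ℝ) * (δ * m - t * M)^2 := by positivity
  have key : ((s:ℝ)*δ*M + m*t)^2 + (s:ℝ)*(δ*m - t*M)^2 = s*M^2 + m^2 := by
    linear_combination ((s:ℝ)*M^2 + m^2) * ht2
  have hA2 : ((s:ℝ)*δ*M + m*t)^2 ≤ s*M^2 + m^2 := by linarith
  have h3A : 3 * ((s:ℝ)*δ*M + m*t) < s*M + m := by nlinarith [hlin, htlt, hm]
  nlinarith [hA2, h3A]
end

section
/- Let s ≥ 9 be an integer and δ a real number with 1/√(s+1) < δ < 1/√s. Suppose γ, M, m are positive reals satisfying γ < m·√(1 − s·δ²) + δ·s·M (upper bound), γ/(s·M + m) ≥ 1/√(s+1) (Nagata lower bound), and γ < 2·M + m. Then a contradiction follows. -/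
private lemma aux_Mm (sR M m γ t : ℝ) (hsR : 9 ≤ sR) (hM : 0 < M) (hm : 0 < m)
    (ht2 : t^2 = sR + 1) (ht3 : 3 < t)
    (hlb : sR * M + m ≤ γ * t) (hcr : γ < 2 * M + m) : M < m := by
  have ht0 : (0:ℝ) < t := by linarith
  have h4 : sR * M + m < (2*M + m) * t :=
    lt_of_le_of_lt hlb (mul_lt_mul_of_pos_right hcr ht0)
  nlinarith [mul_pos hM ht0, mul_pos hM (sub_pos.mpr ht3)]

private lemma aux_key (sR M m δ r t : ℝ) (hsR : 0 < sR) (hM : 0 < M) (hm : 0 < m)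
    (hMm : M < m) (hr0 : 0 ≤ r) (ht0 : 0 < t) (hδt : 1 < δ * t) (hrt : r * t < 1)
    (hid : (1 - r*t) * (1 + r*t) = sR * ((δ*t)^2 - 1)) :
    sR * M * (δ*t - 1) < m * (1 - r*t) := by
  have h5 : M*(1+r*t) < m*(1+δ*t) := by nlinarith
  have h6 : (sR*(δ*t-1)) * (M*(1+r*t)) < (sR*(δ*t-1)) * (m*(1+δ*t)) :=
    mul_lt_mul_of_pos_left h5 (mul_pos hsR (by linarith))
  have hone : (0:ℝ) < 1 + r*t := by positivity
  nlinarith [h6, mul_left_cancel₀ (ne_of_gt hm) (rfl : m * ((1-r*t)*(1+r*t)) = m * ((1-r*t)*(1+r*t))), hid, hone]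

theorem stmt_12 (s : ℕ) (hs : 9 ≤ s) (δ : ℝ)
    (h1 : 1 / Real.sqrt (s + 1) < δ) (h2 : δ < 1 / Real.sqrt s)
    (γ M m : ℝ) (hγ : 0 < γ) (hM : 0 < M) (hm : 0 < m)
    (hub : γ < m * Real.sqrt (1 - s * δ ^ 2) + δ * s * M)
    (hlb : s * M + m ≤ γ * Real.sqrt (s + 1))
    (hcr : γ < 2 * M + m) :
    False := by
  have hs9 : (9:ℝ) ≤ (s:ℝ) := by exact_mod_cast hs
  have hspos : (0:ℝ) < (s:ℝ) := by linarith
  set t := Real.sqrt ((s:ℝ) + 1) with hT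
  have ht2 : t^2 = (s:ℝ) + 1 := Real.sq_sqrt (by positivity)
  have ht0 : 0 < t := Real.sqrt_pos.mpr (by positivity)
  clear_value t
  have ht3 : 3 < t := by nlinarith
  have hδ0 : 0 < δ := lt_trans (by positivity) h1
  have hδt : 1 < δ * t := by
    rw [div_lt_iff₀ ht0] at h1; linarith
  have hu0 : (0:ℝ) < Real.sqrt s := Real.sqrt_pos.mpr hspos
  have hu2 : (Real.sqrt (s:ℝ))^2 = (s:ℝ) := Real.sq_sqrt (by positivity)
  have hx : δ * Real.sqrt s < 1 := by rw [lt_div_iff₀ hu0] at h2; exact h2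
  have hsδ : (s:ℝ) * δ^2 < 1 := by
    have he : (s:ℝ) * δ^2 = (δ * Real.sqrt s)^2 := by
      rw [mul_pow, hu2]; ring
    rw [he]
    nlinarith [mul_pos hδ0 hu0]
  set r := Real.sqrt (1 - (s:ℝ)*δ^2) with hR
  have hr0 : 0 ≤ r := Real.sqrt_nonneg _
  have hr2 : r^2 = 1 - (s:ℝ)*δ^2 := Real.sq_sqrt (by linarith)
  clear_value r
  have hd2 : 1 < δ^2 * ((s:ℝ)+1) := by
    have h' : 1 < δ^2 * t^2 := by nlinarith [mul_pos hδ0 ht0]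
    have h'' : δ^2 * t^2 = δ^2 * ((s:ℝ)+1) := by linear_combination δ^2 * ht2
    linarith [h''.symm ▸ h']
  have hrt2 : (r*t)^2 = (1 - (s:ℝ)*δ^2)*((s:ℝ)+1) := by rw [mul_pow, hr2, ht2]
  have hrt : r * t < 1 := by
    nlinarith [hrt2, hd2, mul_nonneg hr0 ht0.le, hspos,
      mul_lt_mul_of_pos_left hd2 hspos]
  have hMm : M < m := aux_Mm (s:ℝ) M m γ t hs9 hM hm ht2 ht3 hlb hcr
  have hid : (1 - r*t) * (1 + r*t) = (s:ℝ) * ((δ*t)^2 - 1) := by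
    linear_combination (-(t^2))*hr2 - ht2
  have hkey : (s:ℝ)*M*(δ*t-1) < m*(1-r*t) :=
    aux_key (s:ℝ) M m δ r t hspos hM hm hMm hr0 ht0 hδt hrt hid
  have hfin : γ * t < (m*r + δ*(s:ℝ)*M) * t := mul_lt_mul_of_pos_right hub ht0
  linarith [hfin, hkey, hlb]
end
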